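/- arXiv:2505.18854 — 6 statements merged into one kernel-verified Lean document; each statement's English description precedes it below -/
import Mathlib

section
/- Let e : ℝ≥0 → ℝ satisfy the differential equation e' = −k·sign(e) with k > 0 and initial value e(0) = e₀ ≠ 0. Then e reaches 0 in finite time, specifically at time t = |e₀|/k, and |e(t)| = max(|e₀| − k·t, 0) for all t ≥ 0. -/
lemma stmt_3_key (k e₀ : ℝ) (hk : 0 < k) (he₀ : e₀ ≠ 0) (e : ℝ → ℝ)
    (hinit : e 0 = e₀) (hcont : Continuous e)
    (hode : ∀ t : ℝ, 0 ≤ t → e t ≠ 0 → HasDerivAt e (-k * Real.sign (e t)) t)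
    (b : ℝ) (hb : 0 ≤ b) (hne : ∀ t, 0 ≤ t → t < b → e t ≠ 0) :
    ∀ t, 0 ≤ t → t ≤ b → e t = e₀ - k * Real.sign e₀ * t := by
  have hsign : ∀ t, 0 ≤ t → t < b → Real.sign (e t) = Real.sign e₀ := by
    intro t ht htb
    have h1 : e t ≠ 0 := hne t ht htb
    have hpos : 0 < e₀ * e t := by
      rcases lt_trichotomy (e₀ * e t) 0 with hlt | heq | hgt
      · exfalso
        have h0m : (0:ℝ) ∈ Set.uIcc (e 0) (e t) := by
          rw [hinit, Set.mem_uIcc]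
          rcases mul_neg_iff.mp hlt with ⟨h1', h2'⟩ | ⟨h1', h2'⟩
          · exact Or.inr ⟨le_of_lt h2', le_of_lt h1'⟩
          · exact Or.inl ⟨le_of_lt h1', le_of_lt h2'⟩
        obtain ⟨s, hs, hes⟩ := intermediate_value_uIcc (hcont.continuousOn (s := Set.uIcc 0 t)) h0m
        rw [Set.uIcc_of_le ht] at hs
        exact hne s hs.1 (lt_of_le_of_lt hs.2 htb) hes
      · exfalso; rcases mul_eq_zero.mp heq with h | h
        · exact he₀ h
        · exact h1 h
      · exact hgt
    rcases lt_or_gt_of_ne he₀ with hneg | hposs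
    · have : e t < 0 := by nlinarith
      rw [Real.sign_of_neg this, Real.sign_of_neg hneg]
    · have : 0 < e t := by nlinarith
      rw [Real.sign_of_pos this, Real.sign_of_pos hposs]
  set s₀ := Real.sign e₀ with hs₀
  set f : ℝ → ℝ := fun t => e t + k * s₀ * t with hf
  have hfc : ContinuousOn f (Set.Icc 0 b) :=
    (hcont.add ((continuous_const.mul continuous_id))).continuousOn
  have hfd : ∀ x ∈ Set.Ico 0 b, HasDerivWithinAt f 0 (Set.Ici x) x := by
    intro x hx
    have h1 : e x ≠ 0 := hne x hx.1 hx.2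
    have hde : HasDerivAt e (-k * s₀) x := by
      have := hode x hx.1 h1
      rwa [hsign x hx.1 hx.2] at this
    have hlin : HasDerivAt (fun t => k * s₀ * t) (k * s₀) x := by
      simpa using (hasDerivAt_id x).const_mul (k * s₀)
    have : HasDerivAt f (-k * s₀ + k * s₀) x := hde.add hlin
    simpa using this.hasDerivWithinAt
  have hconst := constant_of_has_deriv_right_zero hfc hfd
  intro t ht htb
  have := hconst t ⟨ht, htb⟩
  simp only [hf, hinit, mul_zero, add_zero] at this
  linarith

theorem stmt_3 (k e₀ : ℝ) (hk : 0 < k) (he₀ : e₀ ≠ 0) (e : ℝ → ℝ)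
    (hinit : e 0 = e₀) (hcont : Continuous e)
    (hode : ∀ t : ℝ, 0 ≤ t → e t ≠ 0 → HasDerivAt e (-k * Real.sign (e t)) t)
    (habs : ∀ t : ℝ, 0 ≤ t → e t = 0 → ∀ s : ℝ, t ≤ s → e s = 0) :
    e (|e₀| / k) = 0 ∧ ∀ t : ℝ, 0 ≤ t → |e t| = max (|e₀| - k * t) 0 := by
  set s₀ := Real.sign e₀ with hs₀
  have hs : s₀ = 1 ∨ s₀ = -1 := by
    rcases lt_or_gt_of_ne he₀ with h | h
    · right; rw [hs₀, Real.sign_of_neg h]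
    · left; rw [hs₀, Real.sign_of_pos h]
  have habs₀ : |s₀| = 1 := by rcases hs with h | h <;> rw [h] <;> norm_num
  have hsma : s₀ * |e₀| = e₀ := by
    rcases lt_or_gt_of_ne he₀ with h | h
    · rw [hs₀, Real.sign_of_neg h, abs_of_neg h]; ring
    · rw [hs₀, Real.sign_of_pos h, abs_of_pos h]; ring
  set Z : Set ℝ := Set.Ici 0 ∩ e ⁻¹' {0} with hZ
  have hZmem : ∀ t, t ∈ Z ↔ 0 ≤ t ∧ e t = 0 := by
    intro t; simp [hZ]
  have hZc : IsClosed Z := isClosed_Ici.inter (isClosed_singleton.preimage hcont)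
  have hZbdd : BddBelow Z := ⟨0, fun x hx => ((hZmem x).mp hx).1⟩
  have hZne : Z.Nonempty := by
    by_contra hemp
    have hne : ∀ t, 0 ≤ t → e t ≠ 0 := by
      intro t ht h0
      exact hemp ⟨t, (hZmem t).mpr ⟨ht, h0⟩⟩
    have hT : 0 ≤ |e₀| / k := div_nonneg (abs_nonneg _) hk.le
    have := stmt_3_key k e₀ hk he₀ e hinit hcont hode (|e₀| / k + 1)
      (by linarith) (fun t ht _ => hne t ht) (|e₀| / k) hT (by linarith)
    have hval : k * s₀ * (|e₀| / k) = e₀ := by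
      field_simp
      linear_combination hsma
    rw [hval] at this
    exact hne (|e₀| / k) hT (by linarith)
  set τ := sInf Z with hτ
  have hτZ : τ ∈ Z := hZc.csInf_mem hZne hZbdd
  obtain ⟨hτ0, heτ⟩ := (hZmem τ).mp hτZ
  have hne : ∀ t, 0 ≤ t → t < τ → e t ≠ 0 := by
    intro t ht htτ h0
    exact absurd (csInf_le hZbdd ((hZmem t).mpr ⟨ht, h0⟩)) (not_le.mpr htτ)
  have hlin := stmt_3_key k e₀ hk he₀ e hinit hcont hode τ hτ0 hne
  have hτval : k * τ = |e₀| := by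
    have := hlin τ hτ0 le_rfl
    rw [heτ] at this
    have he₀eq : e₀ = k * s₀ * τ := by linarith
    have : |e₀| = |k * s₀ * τ| := by rw [← he₀eq]
    rw [abs_mul, abs_mul, habs₀, abs_of_pos hk, abs_of_nonneg hτ0] at this
    linarith
  have hτeq : τ = |e₀| / k := by
    rw [← hτval, mul_comm, mul_div_assoc, div_self hk.ne', mul_one]
  constructor
  · rw [← hτeq]; exact heτ
  · intro t ht
    rcases le_or_gt t τ with htτ | hτt
    · have hkt : k * t ≤ |e₀| := by
        rw [← hτval]
        exact mul_le_mul_of_nonneg_left htτ hk.le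
      have het : e t = s₀ * (|e₀| - k * t) := by
        rw [hlin t ht htτ]; linear_combination -hsma
      rw [het, abs_mul, habs₀, one_mul, abs_of_nonneg (by linarith),
        max_eq_left (by linarith)]
    · rw [habs τ hτ0 heτ t hτt.le, abs_zero]
      have : k * τ < k * t := mul_lt_mul_of_pos_left hτt hk
      rw [max_eq_right (by linarith [hτval])]
end

section
/- Let V : ℝ≥0 → ℝ≥0 be differentiable with V'(t) ≤ −k·V(t)^ρ for all t with V(t) > 0, where k > 0 and ρ ∈ (0,1). Then V reaches zero in finite time bounded by V(0)^{1−ρ}/(k(1−ρ)). -/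
theorem stmt_4 (k ρ : ℝ) (hk : 0 < k) (hρ : ρ ∈ Set.Ioo (0 : ℝ) 1)
    (V : ℝ → ℝ) (hVnonneg : ∀ t : ℝ, 0 ≤ t → 0 ≤ V t)
    (hVdiff : Differentiable ℝ V)
    (hVdecay : ∀ t : ℝ, 0 ≤ t → 0 < V t → deriv V t ≤ -k * (V t) ^ ρ) :
    ∃ T : ℝ, 0 ≤ T ∧ T ≤ (V 0) ^ (1 - ρ) / (k * (1 - ρ)) ∧ V T = 0 := by
  obtain ⟨hρ0, hρ1⟩ := hρ
  have h1ρ : 0 < 1 - ρ := by linarith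
  set c : ℝ := k * (1 - ρ) with hc
  have hcpos : 0 < c := mul_pos hk h1ρ
  set Ts : ℝ := (V 0) ^ (1 - ρ) / c with hTs
  have hTsnonneg : 0 ≤ Ts :=
    div_nonneg (Real.rpow_nonneg (hVnonneg 0 le_rfl) _) hcpos.le
  by_contra hcon
  push_neg at hcon
  have hpos : ∀ t ∈ Set.Icc (0 : ℝ) Ts, 0 < V t := by
    intro t ht
    rcases lt_or_eq_of_le (hVnonneg t ht.1) with h | h
    · exact h
    · exact absurd h.symm (hcon t ht.1 ht.2)
  -- the auxiliary function
  set g : ℝ → ℝ := fun t => V t ^ (1 - ρ) + c * t with hg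
  have hgcont : Continuous g := by
    apply Continuous.add
    · exact hVdiff.continuous.rpow_const (fun x => Or.inr h1ρ.le)
    · exact continuous_const.mul continuous_id
  have hderiv : ∀ x ∈ Set.Ioo (0 : ℝ) Ts, HasDerivAt g
      ((1 - ρ) * V x ^ (1 - ρ - 1) * deriv V x + c) x := by
    intro x hx
    have hVx : 0 < V x := hpos x ⟨hx.1.le, hx.2.le⟩
    have h1 : HasDerivAt (fun t => V t ^ (1 - ρ))
        ((1 - ρ) * V x ^ (1 - ρ - 1) * deriv V x) x := by
      have := (hVdiff x).hasDerivAt.rpow_const (p := 1 - ρ) (Or.inl hVx.ne')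
      simpa [mul_comm, mul_assoc, mul_left_comm] using this
    have h2 : HasDerivAt (fun t : ℝ => c * t) c x := by
      simpa using (hasDerivAt_id x).const_mul c
    exact h1.add h2
  have hderiv_nonpos : ∀ x ∈ Set.Ioo (0 : ℝ) Ts, deriv g x ≤ 0 := by
    intro x hx
    have hVx : 0 < V x := hpos x ⟨hx.1.le, hx.2.le⟩
    rw [(hderiv x hx).deriv]
    have hdec := hVdecay x hx.1.le hVx
    have hcoef : 0 ≤ (1 - ρ) * V x ^ (1 - ρ - 1) :=
      mul_nonneg h1ρ.le (Real.rpow_nonneg hVx.le _)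
    have hmul : (1 - ρ) * V x ^ (1 - ρ - 1) * deriv V x
        ≤ (1 - ρ) * V x ^ (1 - ρ - 1) * (-k * V x ^ ρ) :=
      mul_le_mul_of_nonneg_left hdec hcoef
    have hkey : (1 - ρ) * V x ^ (1 - ρ - 1) * (-k * V x ^ ρ) = -c := by
      have hpow : V x ^ (1 - ρ - 1) * V x ^ ρ = 1 := by
        rw [← Real.rpow_add hVx]
        norm_num
      calc (1 - ρ) * V x ^ (1 - ρ - 1) * (-k * V x ^ ρ)
          = -(k * (1 - ρ)) * (V x ^ (1 - ρ - 1) * V x ^ ρ) := by ring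
        _ = -c := by rw [hpow, hc]; ring
    nlinarith [hmul, hkey]
  have hanti : AntitoneOn g (Set.Icc 0 Ts) := by
    apply antitoneOn_of_deriv_nonpos (convex_Icc 0 Ts) hgcont.continuousOn
    · intro x hx
      rw [interior_Icc] at hx
      exact (hderiv x hx).differentiableAt.differentiableWithinAt
    · intro x hx
      rw [interior_Icc] at hx
      exact hderiv_nonpos x hx
  have h0mem : (0 : ℝ) ∈ Set.Icc (0 : ℝ) Ts := ⟨le_rfl, hTsnonneg⟩
  have hTmem : Ts ∈ Set.Icc (0 : ℝ) Ts := ⟨hTsnonneg, le_rfl⟩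
  have := hanti h0mem hTmem hTsnonneg
  have hcTs : c * Ts = V 0 ^ (1 - ρ) := by
    rw [hTs]
    field_simp
  have hVTspos : 0 < V Ts ^ (1 - ρ) :=
    Real.rpow_pos_of_pos (hpos Ts hTmem) _
  simp only [hg, mul_zero, add_zero] at this
  nlinarith [this, hcTs, hVTspos]
end

section
/- Let e₁ : ℝ≥0 → ℝ satisfy e₁' = −k₁·V_m·sgmf(e₁), where k₁, V_m, φ > 0 and sgmf(x) = −x³/(2φ³) + 3x/(2φ) for |x| ≤ φ, sign(x) otherwise. Then W(t) = e₁(t)²/2 satisfies W'(t) < 0 whenever e₁(t) ≠ 0; in particular x·sgmf(x) = x²(3/(2φ) − x²/(2φ³)) > 0 for 0 < |x| ≤ φ. -/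
noncomputable def sgmf (φ x : ℝ) : ℝ :=
  if |x| ≤ φ then -x ^ 3 / (2 * φ ^ 3) + 3 * x / (2 * φ) else Real.sign x

theorem stmt_7 (k₁ Vm φ : ℝ) (hk₁ : 0 < k₁) (hVm : 0 < Vm) (hφ : 0 < φ)
    (e₁ : ℝ → ℝ)
    (hode : ∀ t : ℝ, HasDerivAt e₁ (-(k₁ * Vm) * sgmf φ (e₁ t)) t) :
    (∀ t : ℝ, e₁ t ≠ 0 → deriv (fun s => (e₁ s) ^ 2 / 2) t < 0) ∧
    (∀ x : ℝ, x ≠ 0 → |x| ≤ φ →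
      x * sgmf φ x = x ^ 2 * (3 / (2 * φ) - x ^ 2 / (2 * φ ^ 3)) ∧
      0 < x * sgmf φ x) := by
  have key : ∀ x : ℝ, x ≠ 0 → 0 < x * sgmf φ x := by
    intro x hx
    by_cases h : |x| ≤ φ
    · rw [sgmf, if_pos h]
      have hx2 : 0 < x ^ 2 := by positivity
      have hxb : x ^ 2 ≤ φ ^ 2 := by
        have := sq_abs x ▸ pow_le_pow_left₀ (abs_nonneg x) h 2
        simpa [sq_abs] using this
      have h1 : x * (-x ^ 3 / (2 * φ ^ 3) + 3 * x / (2 * φ)) =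
          x ^ 2 * ((3 * φ ^ 2 - x ^ 2) / (2 * φ ^ 3)) := by
        field_simp; ring
      rw [h1]
      have : 0 < 3 * φ ^ 2 - x ^ 2 := by nlinarith
      positivity
    · rw [sgmf, if_neg h]
      rcases lt_or_gt_of_ne hx with hneg | hpos
      · rw [Real.sign_of_neg hneg]; nlinarith
      · rw [Real.sign_of_pos hpos]; nlinarith
  constructor
  · intro t ht
    have hd : HasDerivAt (fun s => (e₁ s) ^ 2 / 2)
        ((2 * e₁ t ^ 1 * (-(k₁ * Vm) * sgmf φ (e₁ t))) / 2) t := ((hode t).pow 2).div_const 2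
    rw [hd.deriv]
    have := key (e₁ t) ht
    have hkv : 0 < k₁ * Vm := mul_pos hk₁ hVm
    nlinarith
  · intro x hx hb
    have heq : x * sgmf φ x = x ^ 2 * (3 / (2 * φ) - x ^ 2 / (2 * φ ^ 3)) := by
      rw [sgmf, if_pos hb]; field_simp; ring
    exact ⟨heq, key x hx⟩
end

section
/- The solution of e' = −c·(3e/(2φ) − e³/(2φ³)) with c = k₁·V_m > 0, starting at e(t₀) = φ and reaching e(t₁) = η with 0 < η < φ, satisfies t₁ − t₀ = (φ/(3c))·log((3φ² − η²)/(2η²)). -/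
theorem stmt_8 (c φ η t₀ t₁ : ℝ) (hc : 0 < c) (hφ : 0 < φ)
    (hη : 0 < η) (hηφ : η < φ) (ht : t₀ ≤ t₁) (e : ℝ → ℝ)
    (hode : ∀ t ∈ Set.Icc t₀ t₁,
      HasDerivAt e (-c * (3 * e t / (2 * φ) - (e t) ^ 3 / (2 * φ ^ 3))) t)
    (h0 : e t₀ = φ) (h1 : e t₁ = η) :
    t₁ - t₀ = (φ / (3 * c)) * Real.log ((3 * φ ^ 2 - η ^ 2) / (2 * η ^ 2)) := by
  have hφ2 : (0:ℝ) < φ ^ 2 := by positivity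
  set h : ℝ → ℝ := fun t => Real.log (3 * φ ^ 2 - (e t) ^ 2) - Real.log ((e t) ^ 2) with hh
  -- Step 1: derivative of h is the constant 3c/φ wherever 0 < e² < 3φ²
  have hderiv : ∀ t ∈ Set.Icc t₀ t₁, 0 < (e t) ^ 2 → (e t) ^ 2 < 3 * φ ^ 2 →
      HasDerivAt h (3 * c / φ) t := by
    intro t htm hp1 hp2
    have hde := hode t htm
    have he0 : e t ≠ 0 := by
      intro hz; rw [hz] at hp1; simp at hp1
    have hbne : 3 * φ ^ 2 - (e t) ^ 2 ≠ 0 := by linarith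
    have hsq : HasDerivAt (fun t => (e t) ^ 2)
        (2 * e t * (-c * (3 * e t / (2 * φ) - (e t) ^ 3 / (2 * φ ^ 3)))) t := by
      have := hde.fun_pow 2
      exact this.congr_deriv (by ring)
    have hu : HasDerivAt (fun t => 3 * φ ^ 2 - (e t) ^ 2)
        (-(2 * e t * (-c * (3 * e t / (2 * φ) - (e t) ^ 3 / (2 * φ ^ 3))))) t := by
      exact hsq.const_sub (3 * φ ^ 2)
    have hl1 := hu.log hbne
    have hl2 := hsq.log (by positivity : (e t) ^ 2 ≠ 0)
    have hfin := hl1.sub hl2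
    refine hfin.congr_deriv ?_
    field_simp
    ring
  -- Step 2: MVT ⇒ h is affine on any good prefix
  have hA : ∀ s ∈ Set.Icc t₀ t₁,
      (∀ τ ∈ Set.Icc t₀ s, 0 < (e τ) ^ 2 ∧ (e τ) ^ 2 < 3 * φ ^ 2) →
      ∀ τ ∈ Set.Icc t₀ s, h τ - h t₀ = (3 * c / φ) * (τ - t₀) := by
    intro s hs hgood τ hτ
    rcases eq_or_lt_of_le hτ.1 with heq | hlt
    · simp [← heq]
    · have hmem : ∀ x ∈ Set.Icc t₀ τ, x ∈ Set.Icc t₀ t₁ :=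
        fun x hx => ⟨hx.1, le_trans hx.2 (le_trans hτ.2 hs.2)⟩
      have hmem' : ∀ x ∈ Set.Icc t₀ τ, x ∈ Set.Icc t₀ s :=
        fun x hx => ⟨hx.1, le_trans hx.2 hτ.2⟩
      have hd : ∀ x ∈ Set.Icc t₀ τ, HasDerivAt h (3 * c / φ) x := fun x hx =>
        hderiv x (hmem x hx) (hgood x (hmem' x hx)).1 (hgood x (hmem' x hx)).2
      have hcont : ContinuousOn h (Set.Icc t₀ τ) := fun x hx =>
        ((hd x hx).continuousAt).continuousWithinAt
      obtain ⟨ξ, hξ, hsl⟩ := exists_hasDerivAt_eq_slope h (fun _ => 3 * c / φ) hlt hcont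
        (fun x hx => hd x ⟨le_of_lt hx.1, le_of_lt hx.2⟩)
      rw [eq_div_iff (ne_of_gt (sub_pos.mpr hlt))] at hsl
      linarith
  -- h t₀ = log 2
  have ht0 : h t₀ = Real.log 2 := by
    rw [hh]; simp only [h0]
    rw [show 3 * φ ^ 2 - φ ^ 2 = 2 * φ ^ 2 by ring,
      Real.log_mul (by norm_num) (ne_of_gt hφ2)]
    ring
  -- Step 3: explicit formula for e² on good prefixes
  have hform : ∀ τ, 0 < (e τ) ^ 2 → (e τ) ^ 2 < 3 * φ ^ 2 →
      h τ - h t₀ = (3 * c / φ) * (τ - t₀) →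
      (e τ) ^ 2 = 3 * φ ^ 2 / (1 + 2 * Real.exp ((3 * c / φ) * (τ - t₀))) := by
    intro τ hp1 hp2 heq
    have hb : 0 < 3 * φ ^ 2 - (e τ) ^ 2 := by linarith
    have hlog : Real.log ((3 * φ ^ 2 - (e τ) ^ 2) / (e τ) ^ 2)
        = Real.log 2 + (3 * c / φ) * (τ - t₀) := by
      rw [Real.log_div (ne_of_gt hb) (ne_of_gt hp1)]
      rw [hh] at heq; rw [← ht0]; rw [hh] at ht0 ⊢
      linarith [heq]
    have hratio : (3 * φ ^ 2 - (e τ) ^ 2) / (e τ) ^ 2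
        = 2 * Real.exp ((3 * c / φ) * (τ - t₀)) := by
      have := congrArg Real.exp hlog
      rwa [Real.exp_log (by positivity), Real.exp_add, Real.exp_log (by norm_num)] at this
    have hex : 0 < Real.exp ((3 * c / φ) * (τ - t₀)) := Real.exp_pos _
    rw [div_eq_iff (ne_of_gt hp1)] at hratio
    rw [eq_div_iff (by positivity)]
    linarith
  -- Step 4: invariance via continuous induction
  set β : ℝ := 3 * φ ^ 2 / (1 + 2 * Real.exp ((3 * c / φ) * (t₁ - t₀))) with hβ
  have hβpos : 0 < β := by positivity
  have hcontE : ∀ t ∈ Set.Icc t₀ t₁, ContinuousAt e t := fun t htm => (hode t htm).continuousAt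
  have hB : ∀ s ∈ Set.Icc t₀ t₁,
      (∀ τ ∈ Set.Icc t₀ s, 0 < (e τ) ^ 2 ∧ (e τ) ^ 2 < 3 * φ ^ 2) →
      ∀ τ ∈ Set.Icc t₀ s, β ≤ (e τ) ^ 2 ∧ (e τ) ^ 2 ≤ φ ^ 2 := by
    intro s hs hgood τ hτ
    have heq := hform τ (hgood τ hτ).1 (hgood τ hτ).2 (hA s hs hgood τ hτ)
    have hx1 : (0:ℝ) ≤ (3 * c / φ) * (τ - t₀) := by
      have : 0 ≤ τ - t₀ := by linarith [hτ.1]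
      positivity
    have hx2 : (3 * c / φ) * (τ - t₀) ≤ (3 * c / φ) * (t₁ - t₀) := by
      have h3 : 0 ≤ 3 * c / φ := by positivity
      have : τ ≤ t₁ := le_trans hτ.2 hs.2
      nlinarith
    constructor
    · rw [heq, hβ]
      gcongr
    · rw [heq]
      have h1e : (1:ℝ) ≤ Real.exp ((3 * c / φ) * (τ - t₀)) := Real.one_le_exp hx1
      rw [div_le_iff₀ (by positivity)]
      nlinarith
  have good_of : ∀ x : ℝ, β ≤ (e x) ^ 2 ∧ (e x) ^ 2 ≤ φ ^ 2 →
      0 < (e x) ^ 2 ∧ (e x) ^ 2 < 3 * φ ^ 2 :=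
    fun x hx => ⟨lt_of_lt_of_le hβpos hx.1, by nlinarith [hx.2]⟩
  set S : Set ℝ := {s | s ∈ Set.Icc t₀ t₁ ∧
      ∀ τ ∈ Set.Icc t₀ s, β ≤ (e τ) ^ 2 ∧ (e τ) ^ 2 ≤ φ ^ 2} with hS
  have hβφ : β ≤ φ ^ 2 := by
    rw [hβ, div_le_iff₀ (by positivity)]
    have := Real.one_le_exp (show (0:ℝ) ≤ (3 * c / φ) * (t₁ - t₀) by
      have : 0 ≤ t₁ - t₀ := by linarith
      positivity)
    nlinarith
  have ht0S : t₀ ∈ S := by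
    refine ⟨⟨le_refl _, ht⟩, fun τ hτ => ?_⟩
    have hτ0 : τ = t₀ := le_antisymm hτ.2 hτ.1
    rw [hτ0, h0]
    exact ⟨hβφ, le_refl _⟩
  have hSbdd : BddAbove S := ⟨t₁, fun s hs => hs.1.2⟩
  have hSne : S.Nonempty := ⟨t₀, ht0S⟩
  set s₁ : ℝ := sSup S with hs₁
  have hs₁mem : s₁ ∈ Set.Icc t₀ t₁ := ⟨le_csSup hSbdd ht0S, csSup_le hSne fun s hs => hs.1.2⟩
  have hIcoS : ∀ x, t₀ ≤ x → x < s₁ → β ≤ (e x) ^ 2 ∧ (e x) ^ 2 ≤ φ ^ 2 := by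
    intro x hx1 hx2
    obtain ⟨s, hsS, hxs⟩ := exists_lt_of_lt_csSup hSne hx2
    exact hsS.2 x ⟨hx1, le_of_lt hxs⟩
  have hs₁S : s₁ ∈ S := by
    refine ⟨hs₁mem, fun τ hτ => ?_⟩
    rcases lt_or_eq_of_le hτ.2 with hlt | heq
    · exact hIcoS τ hτ.1 hlt
    · subst heq
      rcases eq_or_lt_of_le hτ.1 with h01 | h01
      · rw [← h01, h0]; exact ⟨hβφ, le_refl _⟩
      · haveI : (nhdsWithin s₁ (Set.Ioo t₀ s₁)).NeBot := right_nhdsWithin_Ioo_neBot h01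
        have hce : Filter.Tendsto (fun x => (e x) ^ 2) (nhdsWithin s₁ (Set.Ioo t₀ s₁))
            (nhds ((e s₁) ^ 2)) :=
          (((hcontE s₁ ⟨hτ.1, hs₁mem.2⟩).pow 2).tendsto).mono_left nhdsWithin_le_nhds
        have hev : ∀ᶠ x in nhdsWithin s₁ (Set.Ioo t₀ s₁),
            β ≤ (e x) ^ 2 ∧ (e x) ^ 2 ≤ φ ^ 2 := by
          filter_upwards [self_mem_nhdsWithin] with x hx
          exact hIcoS x (le_of_lt hx.1) hx.2
        exact ⟨ge_of_tendsto hce (hev.mono fun x hx => hx.1),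
          le_of_tendsto hce (hev.mono fun x hx => hx.2)⟩
  have hs₁t₁ : s₁ = t₁ := by
    by_contra hne
    have hlt : s₁ < t₁ := lt_of_le_of_ne hs₁mem.2 hne
    have hgood₁ : 0 < (e s₁) ^ 2 ∧ (e s₁) ^ 2 < 3 * φ ^ 2 :=
      good_of s₁ (hs₁S.2 s₁ ⟨hs₁mem.1, le_refl _⟩)
    have hce : ContinuousAt (fun x => (e x) ^ 2) s₁ := (hcontE s₁ hs₁mem).pow 2
    have hev : ∀ᶠ x in nhds s₁, 0 < (e x) ^ 2 ∧ (e x) ^ 2 < 3 * φ ^ 2 := by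
      have h1 : ∀ᶠ x in nhds s₁, (e x) ^ 2 ∈ Set.Ioo (0:ℝ) (3 * φ ^ 2) :=
        hce (Ioo_mem_nhds hgood₁.1 hgood₁.2)
      exact h1.mono fun x hx => ⟨hx.1, hx.2⟩
    obtain ⟨ε, hε, hball⟩ := Metric.eventually_nhds_iff.mp hev
    set s' : ℝ := min (s₁ + ε / 2) t₁ with hs'
    have hs'gt : s₁ < s' := lt_min (by linarith) hlt
    have hs'mem : s' ∈ Set.Icc t₀ t₁ := ⟨le_trans hs₁mem.1 (le_of_lt hs'gt), min_le_right _ _⟩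
    have hgood' : ∀ τ ∈ Set.Icc t₀ s', 0 < (e τ) ^ 2 ∧ (e τ) ^ 2 < 3 * φ ^ 2 := by
      intro τ hτ
      rcases le_or_gt τ s₁ with hle | hgt
      · exact good_of τ (hs₁S.2 τ ⟨hτ.1, hle⟩)
      · apply hball
        have : τ ≤ s₁ + ε / 2 := le_trans hτ.2 (min_le_left _ _)
        rw [Real.dist_eq, abs_of_pos (sub_pos.mpr hgt)]
        linarith
    have hs'S : s' ∈ S := ⟨hs'mem, hB s' hs'mem hgood'⟩
    exact absurd (le_csSup hSbdd hs'S) (not_le.mpr hs'gt)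
  -- Step 5: conclude
  have hgoodAll : ∀ τ ∈ Set.Icc t₀ t₁, 0 < (e τ) ^ 2 ∧ (e τ) ^ 2 < 3 * φ ^ 2 := by
    intro τ hτ
    exact good_of τ (hs₁S.2 τ (by rw [hs₁t₁]; exact hτ))
  have hfinal := hA t₁ ⟨ht, le_refl _⟩ hgoodAll t₁ ⟨ht, le_refl _⟩
  have hη2 : (0:ℝ) < η ^ 2 := by positivity
  have hb1 : (0:ℝ) < 3 * φ ^ 2 - η ^ 2 := by nlinarith
  have ht1 : h t₁ = Real.log (3 * φ ^ 2 - η ^ 2) - Real.log (η ^ 2) := by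
    rw [hh]; simp only [h1]
  have hlogeq : Real.log ((3 * φ ^ 2 - η ^ 2) / (2 * η ^ 2))
      = Real.log (3 * φ ^ 2 - η ^ 2) - Real.log 2 - Real.log (η ^ 2) := by
    rw [Real.log_div (ne_of_gt hb1) (by positivity),
      Real.log_mul (by norm_num) (ne_of_gt hη2)]
    ring
  rw [ht1, ht0] at hfinal
  rw [hlogeq]
  have hkey : t₁ - t₀ = (φ / (3 * c)) * ((3 * c / φ) * (t₁ - t₀)) := by
    field_simp
  rw [hkey, ← hfinal]
  ring
end

section
/- Let e(t) solve e' = −c·(3e/(2φ) − e³/(2φ³)) with c, φ > 0 and 0 < e(0) ≤ φ. Then 0 < e(t) ≤ φ for all t ≥ 0 and e(t) → 0 as t → ∞. -/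
open Filter

open Real Set in
theorem stmt_9 (c φ : ℝ) (hc : 0 < c) (hφ : 0 < φ) (e : ℝ → ℝ)
    (hode : ∀ t : ℝ, 0 ≤ t →
      HasDerivAt e (-c * (3 * e t / (2 * φ) - (e t) ^ 3 / (2 * φ ^ 3))) t)
    (h0 : 0 < e 0) (h0' : e 0 ≤ φ) :
    (∀ t : ℝ, 0 ≤ t → 0 < e t ∧ e t ≤ φ) ∧
    Tendsto e atTop (nhds 0) := by
  have hφ' : φ ≠ 0 := ne_of_gt hφ
  have hcont : ∀ t : ℝ, 0 ≤ t → ContinuousAt e t := fun t ht => (hode t ht).continuousAt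
  -- key arithmetic fact: for 0 ≤ x ≤ φ, the bracket is in [0, 2x/φ]
  have hbrak : ∀ x : ℝ, 0 ≤ x → x ≤ φ →
      0 ≤ 3 * x / (2 * φ) - x ^ 3 / (2 * φ ^ 3) ∧
      3 * x / (2 * φ) - x ^ 3 / (2 * φ ^ 3) ≤ 2 * x / φ := by
    intro x hx0 hxφ
    constructor
    · have h1 : x ^ 3 / (2 * φ ^ 3) ≤ 3 * x / (2 * φ) := by
        rw [div_le_div_iff₀ (by positivity) (by positivity)]
        nlinarith [mul_le_mul_of_nonneg_left (show x ^ 2 ≤ φ ^ 2 by nlinarith) hx0,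
          mul_nonneg hx0 (pow_nonneg hφ.le 3)]
      linarith
    · have h2 : 0 ≤ x ^ 3 / (2 * φ ^ 3) := by positivity
      have h3 : 3 * x / (2 * φ) ≤ 2 * x / φ := by
        rw [div_le_div_iff₀ (by positivity) hφ]
        nlinarith
      linarith
  -- Part A : upper bound
  have hub : ∀ t : ℝ, 0 ≤ t → e t ≤ φ := by
    by_contra h
    push_neg at h
    obtain ⟨t', ht', hgt⟩ := h
    set B : Set ℝ := {t | 0 ≤ t ∧ φ < e t} with hB
    have hne : B.Nonempty := ⟨t', ht', hgt⟩
    have hbdd : BddBelow B := ⟨0, fun x hx => hx.1⟩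
    set t₀ := sInf B with ht₀def
    have ht₀0 : 0 ≤ t₀ := le_csInf hne fun x hx => hx.1
    have hge : φ ≤ e t₀ := by
      by_contra hlt
      push_neg at hlt
      have hev : ∀ᶠ t in nhds t₀, e t < φ :=
        (hcont t₀ ht₀0).eventually (gt_mem_nhds hlt)
      rw [Metric.eventually_nhds_iff] at hev
      obtain ⟨δ, hδ, hδ'⟩ := hev
      obtain ⟨b, hbB, hb⟩ := exists_lt_of_csInf_lt hne (show sInf B < t₀ + δ by
        rw [← ht₀def]; linarith)
      have hb0 : t₀ ≤ b := csInf_le hbdd hbB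
      have : e b < φ := hδ' (by rw [Real.dist_eq, abs_of_nonneg (by linarith)]; linarith)
      exact absurd hbB.2 (not_lt.2 this.le)
    have hle : e t₀ ≤ φ := by
      rcases eq_or_lt_of_le ht₀0 with h0eq | hpos
      · rw [← h0eq]; exact h0'
      · have h1 : Tendsto e (nhdsWithin t₀ (Iio t₀)) (nhds (e t₀)) :=
          ((hcont t₀ ht₀0).continuousWithinAt).tendsto
        refine le_of_tendsto h1 ?_
        filter_upwards [Ioo_mem_nhdsLT_of_mem (show t₀ ∈ Ioc 0 t₀ from ⟨hpos, le_refl _⟩)]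
          with t ht
        have : t ∉ B := notMem_of_lt_csInf ht.2 hbdd
        simp only [hB, mem_setOf_eq, not_and, not_lt] at this
        exact this ht.1.le
    have heq : e t₀ = φ := le_antisymm hle hge
    have hval : -c * (3 * e t₀ / (2 * φ) - (e t₀) ^ 3 / (2 * φ ^ 3)) = -c := by
      rw [heq]; field_simp
      norm_num
    have hd : HasDerivAt e (-c) t₀ := hval ▸ hode t₀ ht₀0
    rw [hasDerivAt_iff_tendsto_slope] at hd
    have hs : ∀ᶠ x in nhdsWithin t₀ {t₀}ᶜ, slope e t₀ x < 0 :=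
      hd.eventually (gt_mem_nhds (show -c < 0 by linarith))
    rw [eventually_nhdsWithin_iff, Metric.eventually_nhds_iff] at hs
    obtain ⟨δ, hδ, hδ'⟩ := hs
    obtain ⟨b, hbB, hb⟩ := exists_lt_of_csInf_lt hne (show sInf B < t₀ + δ by
      rw [← ht₀def]; linarith)
    have hb0 : t₀ ≤ b := csInf_le hbdd hbB
    have hbne : b ≠ t₀ := by
      intro hcontra
      have h2 := hbB.2
      rw [hcontra, heq] at h2
      exact lt_irrefl φ h2
    have hslope : slope e t₀ b < 0 :=
      hδ' (by rw [Real.dist_eq, abs_of_nonneg (by linarith)]; linarith) hbne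
    rw [slope_def_field] at hslope
    have hbpos : 0 < b - t₀ := lt_of_le_of_ne (by linarith) (fun h => hbne (by linarith))
    have : 0 < (e b - e t₀) / (b - t₀) :=
      div_pos (by rw [heq]; linarith [hbB.2]) hbpos
    linarith
  -- Part B : positivity
  have hpos : ∀ t : ℝ, 0 ≤ t → 0 < e t := by
    by_contra h
    push_neg at h
    obtain ⟨t', ht', hle'⟩ := h
    set B : Set ℝ := {t | 0 ≤ t ∧ e t ≤ 0} with hB
    have hne : B.Nonempty := ⟨t', ht', hle'⟩
    have hbdd : BddBelow B := ⟨0, fun x hx => hx.1⟩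
    set t₁ := sInf B with ht₁def
    have ht₁0 : 0 ≤ t₁ := le_csInf hne fun x hx => hx.1
    have hle1 : e t₁ ≤ 0 := by
      by_contra hlt
      push_neg at hlt
      have hev : ∀ᶠ t in nhds t₁, 0 < e t :=
        (hcont t₁ ht₁0).eventually (lt_mem_nhds hlt)
      rw [Metric.eventually_nhds_iff] at hev
      obtain ⟨δ, hδ, hδ'⟩ := hev
      obtain ⟨b, hbB, hb⟩ := exists_lt_of_csInf_lt hne (show sInf B < t₁ + δ by
        rw [← ht₁def]; linarith)
      have hb0 : t₁ ≤ b := csInf_le hbdd hbB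
      have : 0 < e b := hδ' (by rw [Real.dist_eq, abs_of_nonneg (by linarith)]; linarith)
      linarith [hbB.2]
    have hlower : ∀ t, 0 ≤ t → t < t₁ → 0 < e t := by
      intro t ht htt
      by_contra hcon
      push_neg at hcon
      have : t₁ ≤ t := csInf_le hbdd ⟨ht, hcon⟩
      linarith
    have ht₁pos : 0 < t₁ := by
      rcases eq_or_lt_of_le ht₁0 with h | h
      · exfalso; rw [← h] at hle1; linarith
      · exact h
    have hge1 : 0 ≤ e t₁ := by
      have h1 : Tendsto e (nhdsWithin t₁ (Iio t₁)) (nhds (e t₁)) :=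
        ((hcont t₁ ht₁0).continuousWithinAt).tendsto
      refine ge_of_tendsto h1 ?_
      filter_upwards [Ioo_mem_nhdsLT_of_mem (show t₁ ∈ Ioc 0 t₁ from ⟨ht₁pos, le_refl _⟩)]
        with t ht
      exact (hlower t ht.1.le ht.2).le
    have heq1 : e t₁ = 0 := le_antisymm hle1 hge1
    have hrange : ∀ s ∈ Icc (0:ℝ) t₁, 0 ≤ e s ∧ e s ≤ φ := by
      intro s hs
      refine ⟨?_, hub s hs.1⟩
      rcases eq_or_lt_of_le hs.2 with h | h
      · rw [h, heq1]
      · exact (hlower s hs.1 h).le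
    -- Grönwall in reversed time: v s = e (t₁ - s)
    set v : ℝ → ℝ := fun s => e (t₁ - s) with hv
    set v' : ℝ → ℝ := fun s =>
      -(-c * (3 * e (t₁ - s) / (2 * φ) - (e (t₁ - s)) ^ 3 / (2 * φ ^ 3))) with hv'
    have hvd : ∀ s ∈ Ico (0:ℝ) t₁, HasDerivWithinAt v (v' s) (Ici s) s := by
      intro s hs
      have h1 : HasDerivAt (fun s : ℝ => t₁ - s) (-1) s := by
        simpa using (hasDerivAt_id s).const_sub t₁
      have h2 := (hode (t₁ - s) (by linarith [hs.2])).comp s h1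
      have h3 : HasDerivAt v (v' s) s := by
        exact h2.congr_deriv (by simp only [hv']; ring)
      exact h3.hasDerivWithinAt
    have hvc : ContinuousOn v (Icc 0 t₁) := by
      intro s hs
      exact ((hcont (t₁ - s) (by linarith [hs.2])).comp
        ((continuous_const.sub continuous_id).continuousAt)).continuousWithinAt
    have hbound : ∀ s ∈ Ico (0:ℝ) t₁, ‖v' s‖ ≤ (2 * c / φ) * ‖v s‖ + 0 := by
      intro s hs
      have hmem : (0:ℝ) ≤ t₁ - s := by linarith [hs.2]
      obtain ⟨hx0, hxφ⟩ := hrange (t₁ - s) ⟨hmem, by linarith [hs.1]⟩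
      obtain ⟨hb0, hb2⟩ := hbrak (e (t₁ - s)) hx0 hxφ
      have hvs : v s = e (t₁ - s) := rfl
      rw [add_zero, hvs, Real.norm_eq_abs, Real.norm_eq_abs, abs_of_nonneg hx0]
      have : v' s = c * (3 * e (t₁ - s) / (2 * φ) - (e (t₁ - s)) ^ 3 / (2 * φ ^ 3)) := by
        simp only [hv']; ring
      rw [this, abs_of_nonneg (by positivity)]
      have h5 : c * (3 * e (t₁ - s) / (2 * φ) - (e (t₁ - s)) ^ 3 / (2 * φ ^ 3))
          ≤ c * (2 * e (t₁ - s) / φ) := mul_le_mul_of_nonneg_left hb2 hc.le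
      have h6 : c * (2 * e (t₁ - s) / φ) = 2 * c / φ * e (t₁ - s) := by ring
      linarith
    have ha : ‖v 0‖ ≤ (0:ℝ) := by
      have hv0 : v 0 = e t₁ := by simp [hv]
      rw [hv0, heq1, norm_zero]
    have hg := norm_le_gronwallBound_of_norm_deriv_right_le hvc hvd ha hbound
    have hfin := hg t₁ ⟨le_of_lt ht₁pos, le_refl _⟩
    rw [gronwallBound_ε0, zero_mul] at hfin
    have hv1 : v t₁ = e 0 := by simp [hv]
    rw [hv1, Real.norm_eq_abs, abs_of_pos h0] at hfin
    linarith
  -- Part C : decay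
  refine ⟨fun t ht => ⟨hpos t ht, hub t ht⟩, ?_⟩
  set lam := c / φ with hlam
  have hlampos : 0 < lam := div_pos hc hφ
  set g : ℝ → ℝ := fun t => e t * Real.exp (lam * t) with hg
  have hgd : ∀ t : ℝ, 0 ≤ t → HasDerivAt g
      (-c * (3 * e t / (2 * φ) - (e t) ^ 3 / (2 * φ ^ 3)) * Real.exp (lam * t)
        + e t * (lam * Real.exp (lam * t))) t := by
    intro t ht
    have h1 : HasDerivAt (fun t : ℝ => Real.exp (lam * t)) (lam * Real.exp (lam * t)) t := by
      have h0 := ((hasDerivAt_id t).const_mul lam).exp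
      convert h0 using 1
      show lam * Real.exp (lam * t) = Real.exp (lam * t) * (lam * 1); ring; rfl
    exact (hode t ht).mul h1
  have hganti : AntitoneOn g (Ici (0:ℝ)) := by
    apply antitoneOn_of_deriv_nonpos (convex_Ici 0)
    · intro t ht
      exact ((hgd t ht).continuousAt).continuousWithinAt
    · intro t ht
      rw [interior_Ici] at ht
      exact (hgd t (le_of_lt ht)).differentiableAt.differentiableWithinAt
    · intro t ht
      rw [interior_Ici] at ht
      have ht' : 0 ≤ t := le_of_lt ht
      rw [(hgd t ht').deriv]
      have h1 : 0 < e t := hpos t ht'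
      have h2 : e t ≤ φ := hub t ht'
      have key : -c * (3 * e t / (2 * φ) - (e t) ^ 3 / (2 * φ ^ 3)) + lam * e t ≤ 0 := by
        have hb : e t / φ ≤ 3 * e t / (2 * φ) - (e t) ^ 3 / (2 * φ ^ 3) := by
          rw [div_sub_div _ _ (by positivity : (2:ℝ)*φ ≠ 0) (by positivity : (2:ℝ)*φ^3 ≠ 0),
            div_le_div_iff₀ hφ (by positivity)]
          have he2 : e t ^ 2 ≤ φ ^ 2 := by nlinarith
          nlinarith [mul_nonneg (mul_nonneg (mul_pos hφ hφ).le h1.le) (sub_nonneg.2 he2)]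
        have h3 : lam * e t = c * (e t / φ) := by rw [hlam]; ring
        nlinarith [mul_le_mul_of_nonneg_left hb hc.le]
      have hexp : 0 < Real.exp (lam * t) := Real.exp_pos _
      calc -c * (3 * e t / (2 * φ) - (e t) ^ 3 / (2 * φ ^ 3)) * Real.exp (lam * t)
            + e t * (lam * Real.exp (lam * t))
          = (-c * (3 * e t / (2 * φ) - (e t) ^ 3 / (2 * φ ^ 3)) + lam * e t)
            * Real.exp (lam * t) := by ring
        _ ≤ 0 := mul_nonpos_of_nonpos_of_nonneg key hexp.le
  have hbound : ∀ t : ℝ, 0 ≤ t → e t ≤ e 0 * Real.exp (-(lam * t)) := by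
    intro t ht
    have := hganti (Set.self_mem_Ici) (show t ∈ Ici (0:ℝ) from ht) ht
    simp only [hg, mul_zero, Real.exp_zero, mul_one] at this
    have hexp : 0 < Real.exp (lam * t) := Real.exp_pos _
    rw [Real.exp_neg]
    rw [← le_div_iff₀ hexp] at this
    rw [div_eq_mul_inv] at this
    exact this
  have hupper : Tendsto (fun t => e 0 * Real.exp (-(lam * t))) atTop (nhds 0) := by
    have h1 : Tendsto (fun t : ℝ => -(lam * t)) atTop atBot := by
      apply tendsto_neg_atBot_iff.mpr
      exact Tendsto.const_mul_atTop hlampos tendsto_id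
    have h2 : Tendsto (fun t : ℝ => Real.exp (-(lam * t))) atTop (nhds 0) :=
      Real.tendsto_exp_atBot.comp h1
    simpa using h2.const_mul (e 0)
  apply tendsto_of_tendsto_of_tendsto_of_le_of_le' tendsto_const_nhds hupper
  · filter_upwards [eventually_ge_atTop (0:ℝ)] with t ht
    exact (hpos t ht).le
  · filter_upwards [eventually_ge_atTop (0:ℝ)] with t ht
    exact hbound t ht
end

section
/- Under the engagement kinematics r' = −V_m cos θ_m cos ψ_m, θ' = −V_m sin θ_m / r, ψ' = −V_m cos θ_m sin ψ_m /(r cos θ), together with the heading-rate equations for θ_m' and ψ_m', the effective lead angle σ (cos σ = cos ψ_m cos θ_m) satisfies σ' = V_m sin σ / r + (sin ψ_m/(V_m sin σ))·a_y + (sin θ_m cos ψ_m/(V_m sin σ))·a_z. -/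
set_option maxHeartbeats 1000000 in
theorem stmt_14 (Vm ay az t dσ : ℝ) (hVm : 0 < Vm)
    (r θ ψ θm ψm σ : ℝ → ℝ)
    (hrpos : 0 < r t)
    (hsinσ : Real.sin (σ t) ≠ 0)
    (hcosθ : Real.cos (θ t) ≠ 0)
    (hcosθm : Real.cos (θm t) ≠ 0)
    (hrel : ∀ s : ℝ, Real.cos (σ s) = Real.cos (ψm s) * Real.cos (θm s))
    (hr : HasDerivAt r (-Vm * Real.cos (θm t) * Real.cos (ψm t)) t)
    (hθ : HasDerivAt θ (-Vm * Real.sin (θm t) / r t) t)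
    (hψ : HasDerivAt ψ
      (-Vm * Real.cos (θm t) * Real.sin (ψm t) / (r t * Real.cos (θ t))) t)
    (hθm : HasDerivAt θm
      (az / Vm
        - (-Vm * Real.cos (θm t) * Real.sin (ψm t) / (r t * Real.cos (θ t)))
            * Real.sin (θ t) * Real.sin (ψm t)
        - (-Vm * Real.sin (θm t) / r t) * Real.cos (ψm t)) t)
    (hψm : HasDerivAt ψm
      (ay / (Vm * Real.cos (θm t))
        + (-Vm * Real.cos (θm t) * Real.sin (ψm t) / (r t * Real.cos (θ t)))
            * Real.tan (θm t) * Real.cos (ψm t) * Real.sin (θ t)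
        - (-Vm * Real.cos (θm t) * Real.sin (ψm t) / (r t * Real.cos (θ t)))
            * Real.cos (θ t)
        - (-Vm * Real.sin (θm t) / r t) * Real.tan (θm t) * Real.sin (ψm t)) t)
    (hσ : HasDerivAt σ dσ t) :
    dσ = Vm * Real.sin (σ t) / r t
        + (Real.sin (ψm t) / (Vm * Real.sin (σ t))) * ay
        + (Real.sin (θm t) * Real.cos (ψm t) / (Vm * Real.sin (σ t))) * az := by
  have h1 : HasDerivAt (fun s => Real.cos (σ s)) (-Real.sin (σ t) * dσ) t := hσ.cos
  have h2 := (hψm.cos).mul (hθm.cos)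
  have hfun : (fun s => Real.cos (σ s)) = fun s => Real.cos (ψm s) * Real.cos (θm s) :=
    funext hrel
  rw [hfun] at h1
  have heq := h1.unique h2
  have htan : Real.tan (θm t) = Real.sin (θm t) / Real.cos (θm t) :=
    Real.tan_eq_sin_div_cos _
  rw [htan] at heq
  have hpy : Real.sin (σ t) ^ 2 = 1 - (Real.cos (ψm t) * Real.cos (θm t)) ^ 2 := by
    have h := Real.sin_sq_add_cos_sq (σ t)
    rw [hrel t] at h; nlinarith [h]
  have hpy2 : Real.sin (ψm t) ^ 2 = 1 - Real.cos (ψm t) ^ 2 := by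
    have h := Real.sin_sq_add_cos_sq (ψm t); linarith
  have hpy3 : Real.sin (θm t) ^ 2 = 1 - Real.cos (θm t) ^ 2 := by
    have h := Real.sin_sq_add_cos_sq (θm t); linarith
  have hr0 : r t ≠ 0 := ne_of_gt hrpos
  have hV0 : Vm ≠ 0 := ne_of_gt hVm
  have key : Real.sin (σ t) * dσ =
      (Real.sin (ψm t) * ay + Real.sin (θm t) * Real.cos (ψm t) * az) / Vm
        + Vm * (Real.sin (ψm t) ^ 2 + Real.sin (θm t) ^ 2 * Real.cos (ψm t) ^ 2) / r t := by
    linear_combination (norm := (field_simp; ring1)) (-1 : ℝ) * heq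
      + (Vm * Real.sin (ψm t) ^ 2 / r t) * hpy3
  clear heq h1 h2 hψm hθm hψ hθ hr hσ hfun hrel
  linear_combination (norm := (field_simp; ring1))
    (1 / Real.sin (σ t)) * key
    + (Vm / (r t * Real.sin (σ t))) * hpy2
    + (Vm * Real.cos (ψm t) ^ 2 / (r t * Real.sin (σ t))) * hpy3
    - (Vm / (r t * Real.sin (σ t))) * hpy
end
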